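/- Sliding a tie endpoint across a positive crossing (relation (ii) of the generalized-tie relations): for every n ≥ 2 and all indices 1 ≤ i < j ≤ n−1, the equality σ_j η_{i,j} = η_{i,j+1} σ_j holds in the tied braid monoid TM_n. -/

import Mathlib

/-!
The tied braid monoid `TM n` (n ≥ 2), presented by generators
σ_1,…,σ_{n−1}, σ_1⁻¹,…,σ_{n−1}⁻¹, η_1,…,η_{n−1} subject to the relations:
σ_i σ_i⁻¹ = σ_i⁻¹ σ_i = 1; σ_i σ_{i+1} σ_i = σ_{i+1} σ_i σ_{i+1};
σ_i σ_j = σ_j σ_i for |i−j| ≥ 2; η_i η_j = η_j η_i for all i, j;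
η_i σ_i = σ_i η_i; η_i σ_j = σ_j η_i for |i−j| ≥ 2;
η_i σ_j σ_i^ε = σ_j σ_i^ε η_j for |i−j| = 1, ε = ±1;
η_i η_j σ_i = η_j σ_i η_j = σ_i η_i η_j for |i−j| = 1; η_i² = η_i.
-/

/-- Generators of the tied braid monoid: σ_i, σ_i⁻¹ and η_i for 1 ≤ i ≤ n−1. -/
inductive TMGen (n : ℕ) : Type
  | sig (i : ℕ) (h : 1 ≤ i ∧ i ≤ n - 1) : TMGen n
  | sigInv (i : ℕ) (h : 1 ≤ i ∧ i ≤ n - 1) : TMGen n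
  | eta (i : ℕ) (h : 1 ≤ i ∧ i ≤ n - 1) : TMGen n

/-- The word σ_i in the free monoid on the generators. -/
def wS (n i : ℕ) : FreeMonoid (TMGen n) :=
  if h : 1 ≤ i ∧ i ≤ n - 1 then FreeMonoid.of (TMGen.sig i h) else 1

/-- The word σ_i⁻¹ in the free monoid on the generators. -/
def wSI (n i : ℕ) : FreeMonoid (TMGen n) :=
  if h : 1 ≤ i ∧ i ≤ n - 1 then FreeMonoid.of (TMGen.sigInv i h) else 1

/-- The word η_i in the free monoid on the generators. -/
def wE (n i : ℕ) : FreeMonoid (TMGen n) :=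
  if h : 1 ≤ i ∧ i ≤ n - 1 then FreeMonoid.of (TMGen.eta i h) else 1

/-- The defining relations of the tied braid monoid `TM n`. -/
inductive TMRel (n : ℕ) : FreeMonoid (TMGen n) → FreeMonoid (TMGen n) → Prop
  | inv_right (i : ℕ) (h : 1 ≤ i ∧ i ≤ n - 1) :
      TMRel n (wS n i * wSI n i) 1
  | inv_left (i : ℕ) (h : 1 ≤ i ∧ i ≤ n - 1) :
      TMRel n (wSI n i * wS n i) 1
  | braid (i : ℕ) (h : 1 ≤ i ∧ i + 1 ≤ n - 1) :
      TMRel n (wS n i * wS n (i+1) * wS n i) (wS n (i+1) * wS n i * wS n (i+1))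
  | sig_comm (i j : ℕ) (hi : 1 ≤ i ∧ i ≤ n - 1) (hj : 1 ≤ j ∧ j ≤ n - 1)
      (hij : i + 2 ≤ j ∨ j + 2 ≤ i) :
      TMRel n (wS n i * wS n j) (wS n j * wS n i)
  | eta_comm (i j : ℕ) (hi : 1 ≤ i ∧ i ≤ n - 1) (hj : 1 ≤ j ∧ j ≤ n - 1) :
      TMRel n (wE n i * wE n j) (wE n j * wE n i)
  | eta_sig (i : ℕ) (h : 1 ≤ i ∧ i ≤ n - 1) :
      TMRel n (wE n i * wS n i) (wS n i * wE n i)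
  | eta_sig_far (i j : ℕ) (hi : 1 ≤ i ∧ i ≤ n - 1) (hj : 1 ≤ j ∧ j ≤ n - 1)
      (hij : i + 2 ≤ j ∨ j + 2 ≤ i) :
      TMRel n (wE n i * wS n j) (wS n j * wE n i)
  | eta_slide_pos (i j : ℕ) (hi : 1 ≤ i ∧ i ≤ n - 1) (hj : 1 ≤ j ∧ j ≤ n - 1)
      (hij : j = i + 1 ∨ i = j + 1) :
      TMRel n (wE n i * wS n j * wS n i) (wS n j * wS n i * wE n j)
  | eta_slide_neg (i j : ℕ) (hi : 1 ≤ i ∧ i ≤ n - 1) (hj : 1 ≤ j ∧ j ≤ n - 1)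
      (hij : j = i + 1 ∨ i = j + 1) :
      TMRel n (wE n i * wS n j * wSI n i) (wS n j * wSI n i * wE n j)
  | eta_eta_sig₁ (i j : ℕ) (hi : 1 ≤ i ∧ i ≤ n - 1) (hj : 1 ≤ j ∧ j ≤ n - 1)
      (hij : j = i + 1 ∨ i = j + 1) :
      TMRel n (wE n i * wE n j * wS n i) (wE n j * wS n i * wE n j)
  | eta_eta_sig₂ (i j : ℕ) (hi : 1 ≤ i ∧ i ≤ n - 1) (hj : 1 ≤ j ∧ j ≤ n - 1)
      (hij : j = i + 1 ∨ i = j + 1) :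
      TMRel n (wE n j * wS n i * wE n j) (wS n i * wE n i * wE n j)
  | eta_idem (i : ℕ) (h : 1 ≤ i ∧ i ≤ n - 1) :
      TMRel n (wE n i * wE n i) (wE n i)

/-- The tied braid monoid `TM n`: the quotient of the free monoid on the
generators by the congruence generated by the defining relations. -/
def TM (n : ℕ) := (conGen (TMRel n)).Quotient

instance (n : ℕ) : Monoid (TM n) :=
  inferInstanceAs (Monoid ((conGen (TMRel n)).Quotient))

/-- The generator σ_i of `TM n` (defined for 1 ≤ i ≤ n−1; junk value 1 otherwise). -/
def TM.s (n i : ℕ) : TM n := (conGen (TMRel n)).mk' (wS n i)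

/-- The generator σ_i⁻¹ of `TM n` (defined for 1 ≤ i ≤ n−1; junk value 1 otherwise). -/
def TM.sInv (n i : ℕ) : TM n := (conGen (TMRel n)).mk' (wSI n i)

/-- The generator η_i of `TM n` (defined for 1 ≤ i ≤ n−1; junk value 1 otherwise). -/
def TM.e (n i : ℕ) : TM n := (conGen (TMRel n)).mk' (wE n i)

/-- The generalized tie η_{i,j} = σ_i σ_{i+1} ⋯ σ_{j−2} η_{j−1} σ_{j−2}⁻¹ ⋯ σ_{i+1}⁻¹ σ_i⁻¹,
for 1 ≤ i < j ≤ n (in particular η_{i,i+1} = η_i). -/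
def TM.genTie (n i j : ℕ) : TM n :=
  (((List.range' i (j - 1 - i)).map (TM.s n)).prod) * TM.e n (j - 1) *
    (((List.range' i (j - 1 - i)).reverse.map (TM.sInv n)).prod)

/-!
Writing η_{i,j} = P η_{j−1} P⁻¹ with P = σ_i ⋯ σ_{j−2}, and η_{i,j+1} = P η_{j−1,j+1} P⁻¹,
the relation reduces, since σ_j commutes with every σ_k (k ≤ j − 2) occurring in P, to its
base case σ_j η_{j−1} = η_{j−1,j+1} σ_j with η_{j−1,j+1} = σ_{j−1} η_j σ_{j−1}⁻¹. That case
follows from the three tie-sliding relations between η_{j−1}, η_j and σ_{j−1}^{±1}, σ_j,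
two of which combine to show that η_{j−1} commutes with σ_j².
-/

theorem mul_eq_mul_mul_inv_mul_of_slides {M : Type*} [Monoid M] (a b : Mˣ) (e f : M)
    (h₁ : e * b * a = b * a * f) (h₂ : e * b * ↑a⁻¹ = b * ↑a⁻¹ * f)
    (h₃ : f * a * b = a * b * e) :
    ↑b * e = a * f * ↑a⁻¹ * b := by
  have hbb : e * (b * b) = b * (b * e) :=
    calc e * (b * b) = e * b * ↑a⁻¹ * (a * b) := by simp only [mul_assoc, Units.inv_mul_cancel_left]
      _ = b * ↑a⁻¹ * (f * a * b) := by rw [h₂]; simp only [mul_assoc]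
      _ = b * (b * e) := by rw [h₃]; simp only [mul_assoc, Units.inv_mul_cancel_left]
  calc ↑b * e = ↑b⁻¹ * (e * (b * b)) := by rw [hbb, Units.inv_mul_cancel_left]
    _ = ↑b⁻¹ * (e * b * a) * (↑a⁻¹ * b) := by simp only [mul_assoc, Units.mul_inv_cancel_left]
    _ = a * f * ↑a⁻¹ * b := by rw [h₁]; simp only [mul_assoc, Units.inv_mul_cancel_left]

namespace TM

variable {n : ℕ}

theorem mk'_eq_of_rel {x y : FreeMonoid (TMGen n)} (h : TMRel n x y) :
    (conGen (TMRel n)).mk' x = (conGen (TMRel n)).mk' y :=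
  (Con.eq _).2 (ConGen.Rel.of _ _ h)

theorem s_mul_sInv (i : ℕ) : s n i * sInv n i = 1 := by
  by_cases h : 1 ≤ i ∧ i ≤ n - 1
  · have h := mk'_eq_of_rel (TMRel.inv_right i h)
    rwa [map_mul] at h
  · simp only [s, sInv, wS, wSI, dif_neg h, map_one]
    exact mul_one 1

theorem sInv_mul_s (i : ℕ) : sInv n i * s n i = 1 := by
  by_cases h : 1 ≤ i ∧ i ≤ n - 1
  · have h := mk'_eq_of_rel (TMRel.inv_left i h)
    rwa [map_mul] at h
  · simp only [s, sInv, wS, wSI, dif_neg h, map_one]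
    exact mul_one 1

def sUnit (n i : ℕ) : (TM n)ˣ := ⟨s n i, sInv n i, s_mul_sInv i, sInv_mul_s i⟩

theorem commute_s_s {i j : ℕ} (hij : i + 2 ≤ j ∨ j + 2 ≤ i) : Commute (s n i) (s n j) := by
  by_cases hi : 1 ≤ i ∧ i ≤ n - 1
  · by_cases hj : 1 ≤ j ∧ j ≤ n - 1
    · have h := mk'_eq_of_rel (TMRel.sig_comm i j hi hj hij)
      rwa [map_mul, map_mul] at h
    · simp only [s, wS, dif_neg hj, map_one]
      exact Commute.one_right _
  · simp only [s, wS, dif_neg hi, map_one]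
    exact Commute.one_left _

theorem e_mul_s_mul_s {i j : ℕ} (hi : 1 ≤ i ∧ i ≤ n - 1) (hj : 1 ≤ j ∧ j ≤ n - 1)
    (hij : j = i + 1 ∨ i = j + 1) :
    e n i * s n j * s n i = s n j * s n i * e n j := by
  have h := mk'_eq_of_rel (TMRel.eta_slide_pos i j hi hj hij)
  rwa [map_mul, map_mul, map_mul, map_mul] at h

theorem e_mul_s_mul_sInv {i j : ℕ} (hi : 1 ≤ i ∧ i ≤ n - 1) (hj : 1 ≤ j ∧ j ≤ n - 1)
    (hij : j = i + 1 ∨ i = j + 1) :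
    e n i * s n j * sInv n i = s n j * sInv n i * e n j := by
  have h := mk'_eq_of_rel (TMRel.eta_slide_neg i j hi hj hij)
  rwa [map_mul, map_mul, map_mul, map_mul] at h

/-- σ_i σ_{i+1} ⋯ σ_{k−1}. -/
def sProd (n i k : ℕ) : TM n := ((List.range' i (k - i)).map (s n)).prod

/-- σ_{k−1}⁻¹ ⋯ σ_{i+1}⁻¹ σ_i⁻¹. -/
def sInvProd (n i k : ℕ) : TM n := ((List.range' i (k - i)).reverse.map (sInv n)).prod

theorem genTie_eq_sProd_mul_genTie_mul_sInvProd {i k j : ℕ} (hik : i ≤ k) (hkj : k < j) :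
    genTie n i j = sProd n i k * genTie n k j * sInvProd n i k := by
  have hsplit : List.range' i (j - 1 - i) = List.range' i (k - i) ++ List.range' k (j - 1 - k) := by
    have h := (List.range'_append_1 (s := i) (m := k - i) (n := j - 1 - k)).symm
    rwa [Nat.add_sub_cancel' hik, show k - i + (j - 1 - k) = j - 1 - i by omega] at h
  simp only [genTie, sProd, sInvProd, hsplit, List.reverse_append, List.map_append,
    List.prod_append, mul_assoc]

theorem commute_s_sProd {i k j : ℕ} (hkj : k < j) : Commute (s n j) (sProd n i k) :=
  Commute.list_prod_right _ _ fun x hx => by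
    obtain ⟨m, hm, rfl⟩ := List.mem_map.1 hx
    exact commute_s_s (Or.inr (by rw [List.mem_range'_1] at hm; omega))

theorem commute_s_sInvProd {i k j : ℕ} (hkj : k < j) : Commute (s n j) (sInvProd n i k) :=
  Commute.list_prod_right _ _ fun x hx => by
    obtain ⟨m, hm, rfl⟩ := List.mem_map.1 hx
    rw [List.mem_reverse, List.mem_range'_1] at hm
    exact (commute_s_s (n := n) (Or.inr (by omega))).units_inv_right (u := sUnit n m)

theorem s_mul_genTie_pred {j : ℕ} (hj : 2 ≤ j ∧ j ≤ n - 1) :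
    s n j * genTie n (j - 1) j = genTie n (j - 1) (j + 1) * s n j := by
  have hj' : 1 ≤ j ∧ j ≤ n - 1 := ⟨by omega, hj.2⟩
  have hj₁ : 1 ≤ j - 1 ∧ j - 1 ≤ n - 1 := ⟨by omega, by omega⟩
  have hlen : j - (j - 1) = 1 := by omega
  simp only [genTie, Nat.sub_self, List.range'_zero, hlen, Nat.add_sub_cancel,
    List.range'_one, List.map_nil, List.map_cons, List.reverse_singleton, List.reverse_nil,
    List.prod_nil, List.prod_cons, one_mul, mul_one]
  exact mul_eq_mul_mul_inv_mul_of_slides (sUnit n (j - 1)) (sUnit n j) (e n (j - 1)) (e n j)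
    (e_mul_s_mul_s hj₁ hj' (Or.inl (by omega))) (e_mul_s_mul_sInv hj₁ hj' (Or.inl (by omega)))
    (e_mul_s_mul_s hj' hj₁ (Or.inr (by omega)))

end TM

theorem tm_genTie_rel_ii_general (n : ℕ) (i j : ℕ)
    (hi : 1 ≤ i) (hij : i < j) (hj : j ≤ n - 1) :
    TM.s n j * TM.genTie n i j = TM.genTie n i (j + 1) * TM.s n j := by
  have hk : j - 1 < j := by omega
  rw [TM.genTie_eq_sProd_mul_genTie_mul_sInvProd (j := j) (k := j - 1) (by omega) hk,
    TM.genTie_eq_sProd_mul_genTie_mul_sInvProd (j := j + 1) (k := j - 1) (by omega) (by omega)]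
  have hbase : TM.s n j * TM.genTie n (j - 1) j = TM.genTie n (j - 1) (j + 1) * TM.s n j :=
    TM.s_mul_genTie_pred ⟨by omega, hj⟩
  exact ((TM.commute_s_sProd hk).semiconjBy.mul_right hbase).mul_right
    (TM.commute_s_sInvProd hk).semiconjBy

/-- **Relation (ii) of the generalized-tie relations**: for every n ≥ 2 and indices
1 ≤ i < j ≤ n−1, σ_j η_{i,j} = η_{i,j+1} σ_j holds in `TM n`. -/
theorem tm_genTie_rel_ii (n : ℕ) (hn : 2 ≤ n) (i j : ℕ)
    (hi : 1 ≤ i) (hij : i < j) (hj : j ≤ n - 1) :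
    TM.s n j * TM.genTie n i j = TM.genTie n i (j + 1) * TM.s n j :=
  tm_genTie_rel_ii_general n i j hi hij hj
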